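/- arXiv:2004.09012 — 4 statements merged into one kernel-verified Lean document; each statement's English description precedes it below -/
import Mathlib

section
/- Let G be a group and let B, C be arbitrary elements of G. Define F_2(B,C) = [B,C] and, recursively, F_{i+1}(B,C) = F_i(B,C)·[C^{i-1}, B^i]·[B^i, C^i] for i ≥ 2. Then for every integer i ≥ 2, one has (BC)^i = F_i(B,C) · C^{i-1} · B^i · C. -/
open scoped commutatorElement

/-!
Right multiplication by `BC` turns the tail `C^n B^(n+1) C` into the next tail
`C^(n+1) B^(n+2) C`, at the cost of the two commutators that the recurrence appends to `F`.
The case `n = 0` of this identity is also the base case `(BC)^2 = ⁅B, C⁆ C B^2 C`.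
-/

theorem pow_mul_pow_succ_mul_mul_mul_eq {G : Type*} [Group G] (B C : G) (n : ℕ) :
    C ^ n * B ^ (n + 1) * C * (B * C) =
      ⁅C ^ n, B ^ (n + 1)⁆ * ⁅B ^ (n + 1), C ^ (n + 1)⁆ * (C ^ (n + 1) * B ^ (n + 2) * C) := by
  simp only [commutatorElement_def]
  group

/-- If `F : ℕ → G` satisfies `F 2 = ⁅B,C⁆` and the recurrence
`F (i+1) = F i * ⁅C^(i-1), B^i⁆ * ⁅B^i, C^i⁆` for `i ≥ 2`, then
`(B*C)^i = F i * C^(i-1) * B^i * C` for all `i ≥ 2`. -/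
theorem stmt0 {G : Type*} [Group G] (B C : G) (F : ℕ → G)
    (hF2 : F 2 = ⁅B, C⁆)
    (hFrec : ∀ i : ℕ, 2 ≤ i → F (i + 1) = F i * ⁅C ^ (i - 1), B ^ i⁆ * ⁅B ^ i, C ^ i⁆) :
    ∀ i : ℕ, 2 ≤ i → (B * C) ^ i = F i * C ^ (i - 1) * B ^ i * C := by
  intro i hi
  induction i, hi using Nat.le_induction with
  | base =>
    rw [hF2]
    simpa [sq, mul_assoc] using pow_mul_pow_succ_mul_mul_mul_eq B C 0
  | succ n hn ih =>
    obtain ⟨m, rfl⟩ : ∃ m, n = m + 1 := ⟨n - 1, by omega⟩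
    calc (B * C) ^ (m + 1 + 1)
        = F (m + 1) * (C ^ m * B ^ (m + 1) * C * (B * C)) := by
          rw [pow_succ, ih, Nat.add_sub_cancel]; simp only [mul_assoc]
      _ = F (m + 1 + 1) * C ^ (m + 1 + 1 - 1) * B ^ (m + 1 + 1) * C := by
          rw [pow_mul_pow_succ_mul_mul_mul_eq, hFrec _ hn, Nat.add_sub_cancel, Nat.add_sub_cancel]
          simp only [mul_assoc]
end

section
/- Let G be a group, let k ≥ 2 be an integer, and let B, C be elements of G with B^k = 1 and C^k = 1. Then (BC)^k = [B,C] · ∏_{j=2}^{k-1} ( [C^{j-1}, B^j] · [B^j, C^j] ), where the product is taken in increasing order of j. In particular, (BC)^k is a product of 2k−3 commutators, each of whose arguments is a power of B or a power of C. -/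
open scoped commutatorElement

/-!
With `P n = (BC)ⁿ B⁻ⁿ C⁻ⁿ`, each factor `⁅C^(n+1), B^(n+2)⁆ * ⁅B^(n+2), C^(n+2)⁆` turns
`P (n+1)` into `P (n+2)`, so the product telescopes to `P (k-1)`. When `B^k = C^k = 1` we have
`B^(1-k) = B` and `C^(1-k) = C`, hence `P (k-1) = (BC)^k`.
-/

section

variable {G : Type*} [Group G] (B C : G)

theorem mul_pow_mul_inv_pow_mul_commutatorElement_pow (n : ℕ) :
    (B * C) ^ (n + 1) * (B ^ (n + 1))⁻¹ * (C ^ (n + 1))⁻¹ *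
        (⁅C ^ (n + 1), B ^ (n + 2)⁆ * ⁅B ^ (n + 2), C ^ (n + 2)⁆) =
      (B * C) ^ (n + 2) * (B ^ (n + 2))⁻¹ * (C ^ (n + 2))⁻¹ := by
  simp only [commutatorElement_def, pow_succ (B * C) (n + 1)]
  group

theorem commutatorElement_mul_prod_range (n : ℕ) :
    ⁅B, C⁆ * ((List.range n).map
        (fun m => ⁅C ^ (m + 1), B ^ (m + 2)⁆ * ⁅B ^ (m + 2), C ^ (m + 2)⁆)).prod =
      (B * C) ^ (n + 1) * (B ^ (n + 1))⁻¹ * (C ^ (n + 1))⁻¹ := by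
  induction n with
  | zero => simp [commutatorElement_def]
  | succ n ih =>
    rw [List.range_succ, List.map_append, List.prod_append, ← mul_assoc, ih, List.map_singleton,
      List.prod_singleton, mul_pow_mul_inv_pow_mul_commutatorElement_pow]

end

/-- If `B^k = 1` and `C^k = 1` with `k ≥ 2`, then
`(BC)^k = ⁅B,C⁆ * ∏_{j=2}^{k-1} (⁅C^(j-1), B^j⁆ * ⁅B^j, C^j⁆)`,
the product taken in increasing order of `j`.  In particular `(BC)^k` is a
product of `2k-3` commutators of powers of `B` and `C`. -/
theorem stmt1 {G : Type*} [Group G] (k : ℕ) (hk : 2 ≤ k) (B C : G)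
    (hB : B ^ k = 1) (hC : C ^ k = 1) :
    (B * C) ^ k =
      ⁅B, C⁆ *
        (((List.range (k - 2)).map
          (fun m => ⁅C ^ (m + 1), B ^ (m + 2)⁆ * ⁅B ^ (m + 2), C ^ (m + 2)⁆)).prod) := by
  obtain ⟨n, rfl⟩ : ∃ n, k = n + 2 := ⟨k - 2, by omega⟩
  have hB' : (B ^ (n + 1))⁻¹ = B := inv_eq_of_mul_eq_one_left (by rwa [← pow_succ'])
  have hC' : (C ^ (n + 1))⁻¹ = C := inv_eq_of_mul_eq_one_left (by rwa [← pow_succ'])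
  rw [Nat.add_sub_cancel, commutatorElement_mul_prod_range, hB', hC', mul_assoc, ← pow_succ]
end

section
/- Let R be an associative ring with unity and let n ∈ ℕ. If A and B are n×n upper unitriangular matrices over R (all diagonal entries 1, all subdiagonal entries 0) whose first-superdiagonal entries are all equal to 1 (i.e. A_{i,i+1} = B_{i,i+1} = 1 for all i), then A and B are conjugate in UT_n(R): there exists X ∈ UT_n(R) with X A X^{-1} = B. -/
/-!
Write `A = 1 + N` and `B = 1 + N'` with `N`, `N'` strictly upper triangular with ones on the
superdiagonal, and let `S` be the standard nilpotent shift. The vectors `e₀ Nⁱ` are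
unitriangular in `i` and `N` maps each to the next, so the matrix `Y` with these rows satisfies
`Y N = S Y`; dually the matrix `C` with columns `N'^(n-j) eₙ` satisfies `N' C = C S`.
Then `X = C Y` is unitriangular with `X N = N' X`, i.e. `X A = B X`, and `X` is invertible
because `X - 1` is nilpotent.
-/

namespace Matrix

variable {m R : Type*}

def IsStrictlyUpperTriangular [Zero R] [LE m] (M : Matrix m m R) : Prop :=
  ∀ ⦃i j⦄, j ≤ i → M i j = 0

def IsUnitriangular [Zero R] [One R] [LT m] (M : Matrix m m R) : Prop :=
  M.IsUpperTriangular ∧ ∀ i, M i i = 1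

theorem IsUnitriangular.isStrictlyUpperTriangular_sub_one [AddGroupWithOne R] [LinearOrder m]
    [DecidableEq m] {M : Matrix m m R} (hM : M.IsUnitriangular) :
    (M - 1).IsStrictlyUpperTriangular := by
  intro i j hji
  obtain rfl | hlt := hji.eq_or_lt
  · simp [hM.2]
  · rw [sub_apply, hM.1 hlt, one_apply_ne hlt.ne', sub_self]

theorem IsUnitriangular.mul [NonAssocSemiring R] [Fintype m] [LinearOrder m]
    {M N : Matrix m m R} (hM : M.IsUnitriangular) (hN : N.IsUnitriangular) :
    (M * N).IsUnitriangular := by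
  refine ⟨hM.1.mul hN.1, fun i => ?_⟩
  rw [mul_apply, Finset.sum_eq_single i (fun k _ hk => ?_) (by simp), hM.2, hN.2, one_mul]
  obtain hki | hik := hk.lt_or_gt
  · rw [hM.1 hki, zero_mul]
  · rw [hN.1 hik, mul_zero]

section Fin

variable {n : ℕ}

def OnesOnSuperdiagonal [One R] (M : Matrix (Fin n) (Fin n) R) : Prop :=
  ∀ i j : Fin n, (j : ℕ) = i + 1 → M i j = 1

theorem OnesOnSuperdiagonal.sub_one [AddGroupWithOne R] {M : Matrix (Fin n) (Fin n) R}
    (hM : M.OnesOnSuperdiagonal) : (M - 1).OnesOnSuperdiagonal := fun i j hij => by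
  rw [sub_apply, one_apply_ne (Fin.ne_of_val_ne (by omega)), sub_zero, hM i j hij]

theorem IsStrictlyUpperTriangular.pow_apply_eq_zero [Semiring R]
    {N : Matrix (Fin n) (Fin n) R} (hN : N.IsStrictlyUpperTriangular) {k : ℕ} {i j : Fin n}
    (hij : (j : ℕ) < i + k) : (N ^ k) i j = 0 := by
  induction k generalizing j with
  | zero => exact one_apply_ne (by omega)
  | succ k ih =>
    rw [pow_succ, mul_apply]
    refine Finset.sum_eq_zero fun l _ => ?_
    by_cases hl : (l : ℕ) < i + k
    · rw [ih hl, zero_mul]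
    · rw [hN (show j ≤ l by omega), mul_zero]

theorem IsStrictlyUpperTriangular.pow_apply_eq_one [Semiring R]
    {N : Matrix (Fin n) (Fin n) R} (hN : N.IsStrictlyUpperTriangular)
    (hsup : N.OnesOnSuperdiagonal) {k : ℕ} {i j : Fin n}
    (hij : (j : ℕ) = i + k) : (N ^ k) i j = 1 := by
  induction k generalizing j with
  | zero => rw [pow_zero, show j = i from Fin.ext (by omega), one_apply_eq]
  | succ k ih =>
    have hl : (i : ℕ) + k < n := by omega
    rw [pow_succ, mul_apply, Finset.sum_eq_single ⟨i + k, hl⟩ (fun l _ hl' => ?_) (by simp),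
      ih rfl, hsup _ _ (by simp; omega), one_mul]
    by_cases hlt : (l : ℕ) < i + k
    · rw [hN.pow_apply_eq_zero hlt, zero_mul]
    · rw [hN (show j ≤ l by have := Fin.val_ne_of_ne hl'; simp at this; omega), mul_zero]

theorem IsStrictlyUpperTriangular.pow_card_eq_zero [Semiring R]
    {N : Matrix (Fin n) (Fin n) R} (hN : N.IsStrictlyUpperTriangular) : N ^ n = 0 := by
  ext i j
  exact hN.pow_apply_eq_zero (by omega)

theorem IsUnitriangular.isUnit [Ring R] {M : Matrix (Fin n) (Fin n) R}
    (hM : M.IsUnitriangular) : IsUnit M := by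
  simpa using (IsNilpotent.isUnit_one_add
    ⟨n, hM.isStrictlyUpperTriangular_sub_one.pow_card_eq_zero⟩ : IsUnit (1 + (M - 1)))

def upperShift (n : ℕ) (R : Type*) [Zero R] [One R] : Matrix (Fin n) (Fin n) R :=
  of fun i j => if (i : ℕ) + 1 = j then 1 else 0

theorem upperShift_mul_apply [Semiring R] (M : Matrix (Fin n) (Fin n) R) (i j : Fin n) :
    (upperShift n R * M) i j = if h : (i : ℕ) + 1 < n then M ⟨i + 1, h⟩ j else 0 := by
  simp only [mul_apply, upperShift, of_apply, ite_mul, one_mul, zero_mul]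
  split_ifs with h
  · rw [Finset.sum_eq_single ⟨i + 1, h⟩ (fun k _ hk => if_neg fun e => hk (Fin.ext e.symm))
      (by simp), if_pos rfl]
  · exact Finset.sum_eq_zero fun k _ => if_neg (by omega)

theorem mul_upperShift_apply [Semiring R] (M : Matrix (Fin n) (Fin n) R) (i j : Fin n) :
    (M * upperShift n R) i j = if h : 0 < (j : ℕ) then M i ⟨j - 1, by omega⟩ else 0 := by
  simp only [mul_apply, upperShift, of_apply, mul_ite, mul_one, mul_zero]
  split_ifs with h
  · rw [Finset.sum_eq_single ⟨j - 1, by omega⟩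
      (fun k _ hk => if_neg fun e => hk (Fin.ext (by simp; omega))) (by simp),
      if_pos (by simp; omega)]
  · exact Finset.sum_eq_zero fun k _ => if_neg (by omega)

end Fin

section Krylov

variable [Ring R] {n : ℕ} {N : Matrix (Fin (n + 1)) (Fin (n + 1)) R}

def rowKrylov (N : Matrix (Fin (n + 1)) (Fin (n + 1)) R) : Matrix (Fin (n + 1)) (Fin (n + 1)) R :=
  of fun i j => (N ^ (i : ℕ)) 0 j

def colKrylov (N : Matrix (Fin (n + 1)) (Fin (n + 1)) R) : Matrix (Fin (n + 1)) (Fin (n + 1)) R :=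
  of fun i j => (N ^ (n - j)) i (Fin.last n)

theorem rowKrylov_mul_self (hN : N.IsStrictlyUpperTriangular) :
    rowKrylov N * N = upperShift (n + 1) R * rowKrylov N := by
  ext i j
  have hrow : (rowKrylov N * N) i j = (N ^ ((i : ℕ) + 1)) 0 j := by
    simp only [rowKrylov, pow_succ, mul_apply, of_apply]
  rw [hrow, upperShift_mul_apply]
  split_ifs with h
  · rfl
  · exact hN.pow_apply_eq_zero (by simp; omega)

theorem self_mul_colKrylov (hN : N.IsStrictlyUpperTriangular) :
    N * colKrylov N = colKrylov N * upperShift (n + 1) R := by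
  ext i j
  have hcol : (N * colKrylov N) i j = (N ^ (n - j + 1)) i (Fin.last n) := by
    simp only [colKrylov, pow_succ', mul_apply, of_apply]
  rw [hcol, mul_upperShift_apply]
  split_ifs with h
  · have := j.is_le
    rw [colKrylov, of_apply, show n - (j : ℕ) + 1 = n - ((j : ℕ) - 1) by omega]
  · exact hN.pow_apply_eq_zero (by simp; omega)

theorem isUnitriangular_rowKrylov (hN : N.IsStrictlyUpperTriangular)
    (hsup : N.OnesOnSuperdiagonal) : (rowKrylov N).IsUnitriangular :=
  ⟨fun i j hji => hN.pow_apply_eq_zero (by simpa using hji),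
    fun i => hN.pow_apply_eq_one hsup (by simp)⟩

theorem isUnitriangular_colKrylov (hN : N.IsStrictlyUpperTriangular)
    (hsup : N.OnesOnSuperdiagonal) : (colKrylov N).IsUnitriangular :=
  ⟨fun i j (hji : j < i) => hN.pow_apply_eq_zero
      (by have := j.is_le; simp only [Fin.val_last]; omega),
    fun i => hN.pow_apply_eq_one hsup (by have := i.is_le; simp only [Fin.val_last]; omega)⟩

theorem exists_isUnitriangular_mul_eq_mul_of_isStrictlyUpperTriangular
    {N N' : Matrix (Fin (n + 1)) (Fin (n + 1)) R}
    (hN : N.IsStrictlyUpperTriangular) (hsup : N.OnesOnSuperdiagonal)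
    (hN' : N'.IsStrictlyUpperTriangular) (hsup' : N'.OnesOnSuperdiagonal) :
    ∃ X : Matrix (Fin (n + 1)) (Fin (n + 1)) R, X.IsUnitriangular ∧ X * N = N' * X :=
  ⟨colKrylov N' * rowKrylov N,
    (isUnitriangular_colKrylov hN' hsup').mul (isUnitriangular_rowKrylov hN hsup), by
    rw [mul_assoc, rowKrylov_mul_self hN, ← mul_assoc, ← self_mul_colKrylov hN', mul_assoc]⟩

end Krylov

theorem IsUnitriangular.exists_isUnitriangular_mul_eq_mul [Ring R] {n : ℕ}
    {A B : Matrix (Fin n) (Fin n) R}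
    (hA : A.IsUnitriangular) (hAsup : A.OnesOnSuperdiagonal)
    (hB : B.IsUnitriangular) (hBsup : B.OnesOnSuperdiagonal) :
    ∃ X : Matrix (Fin n) (Fin n) R, X.IsUnitriangular ∧ X * A = B * X := by
  cases n with
  | zero => exact ⟨1, ⟨fun i => i.elim0, fun i => i.elim0⟩, Subsingleton.elim _ _⟩
  | succ n =>
    obtain ⟨X, hX, hXAB⟩ := exists_isUnitriangular_mul_eq_mul_of_isStrictlyUpperTriangular
      hA.isStrictlyUpperTriangular_sub_one hAsup.sub_one
      hB.isStrictlyUpperTriangular_sub_one hBsup.sub_one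
    exact ⟨X, hX, by rwa [mul_sub_one, sub_one_mul, sub_left_inj] at hXAB⟩

end Matrix

/-- Two `n×n` upper unitriangular matrices over a ring `R` whose first
superdiagonal entries are all equal to `1` are conjugate by a unitriangular
matrix. -/
theorem stmt8 {R : Type*} [Ring R] (n : ℕ) (A B : Matrix (Fin n) (Fin n) R)
    (hAdiag : ∀ i : Fin n, A i i = 1)
    (hAlow : ∀ i j : Fin n, j < i → A i j = 0)
    (hAsup : ∀ (i : Fin n) (h : i.val + 1 < n), A i ⟨i.val + 1, h⟩ = 1)
    (hBdiag : ∀ i : Fin n, B i i = 1)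
    (hBlow : ∀ i j : Fin n, j < i → B i j = 0)
    (hBsup : ∀ (i : Fin n) (h : i.val + 1 < n), B i ⟨i.val + 1, h⟩ = 1) :
    ∃ X : (Matrix (Fin n) (Fin n) R)ˣ,
      (∀ i : Fin n, X.val i i = 1) ∧
      (∀ i j : Fin n, j < i → X.val i j = 0) ∧
      X.val * A * (X⁻¹).val = B := by
  have superdiag {M : Matrix (Fin n) (Fin n) R}
      (hM : ∀ (i : Fin n) (h : i.val + 1 < n), M i ⟨i.val + 1, h⟩ = 1) :
      M.OnesOnSuperdiagonal := fun i j hij => by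
    rw [show j = ⟨i + 1, by omega⟩ from Fin.ext hij]
    exact hM i _
  obtain ⟨X, hX, hXAB⟩ := Matrix.IsUnitriangular.exists_isUnitriangular_mul_eq_mul
    ⟨fun i j => hAlow i j, hAdiag⟩ (superdiag hAsup)
    ⟨fun i j => hBlow i j, hBdiag⟩ (superdiag hBsup)
  obtain ⟨u, rfl⟩ := hX.isUnit
  exact ⟨u, hX.2, fun i j h => hX.1 h, by rw [hXAB, mul_assoc, Units.mul_inv, mul_one]⟩
end

section
/- Let k ≥ 2 be an integer and let a ∈ ℂ with a ∉ {0, 1, −1}. Then there exist matrices J_1, J_2 ∈ GL_2(ℂ) with J_1^k = I and J_2^k = I such that J_1 · J_2 = diag(a, a^{-1}), the 2×2 diagonal matrix with diagonal entries a and a^{-1}. -/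
open Matrix

/-- If `M` is conjugate (via invertible `P`) to a matrix `D` with `D ^ k = 1`,
then `M` lifts to a unit in `GL (Fin 2) ℂ` whose `k`-th power is `1`. -/
lemma key_aux (k : ℕ) (M P D : Matrix (Fin 2) (Fin 2) ℂ)
    (hP : P.det ≠ 0) (hD : D.det ≠ 0)
    (hMP : M * P = P * D) (hDk : D ^ k = 1) :
    ∃ J : GL (Fin 2) ℂ, (J : Matrix (Fin 2) (Fin 2) ℂ) = M ∧ J ^ k = 1 := by
  have hPu : IsUnit P.det := isUnit_iff_ne_zero.mpr hP
  have hDu : IsUnit D.det := isUnit_iff_ne_zero.mpr hD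
  let uP : (Matrix (Fin 2) (Fin 2) ℂ)ˣ := Matrix.nonsingInvUnit P hPu
  let uD : (Matrix (Fin 2) (Fin 2) ℂ)ˣ := Matrix.nonsingInvUnit D hDu
  have huDk : uD ^ k = 1 := by
    apply Units.ext
    rw [Units.val_pow_eq_pow_val]
    exact hDk
  refine ⟨uP * uD * uP⁻¹, ?_, ?_⟩
  · show (P * D) * P⁻¹ = M
    rw [← hMP, Matrix.mul_assoc, Matrix.mul_nonsing_inv P hPu, Matrix.mul_one]
  · have : (uP * uD * uP⁻¹) ^ k = uP * uD ^ k * uP⁻¹ := by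
      have := map_pow (MulAut.conj uP) uD k
      simpa [MulAut.conj_apply] using this.symm
    rw [this, huDk, mul_one, mul_inv_cancel]

/-- For `k ≥ 2` and `a ∈ ℂ \ {0, 1, -1}`, there are `J₁, J₂ ∈ GL_2(ℂ)` with
`J₁^k = 1` and `J₂^k = 1` whose product is `diag(a, a⁻¹)`. -/
theorem stmt12 (k : ℕ) (hk : 2 ≤ k) (a : ℂ) (ha0 : a ≠ 0) (ha1 : a ≠ 1) (ham1 : a ≠ -1) :
    ∃ J₁ J₂ : GL (Fin 2) ℂ,
      J₁ ^ k = 1 ∧ J₂ ^ k = 1 ∧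
      ((J₁ * J₂ : GL (Fin 2) ℂ) : Matrix (Fin 2) (Fin 2) ℂ) = !![a, 0; 0, a⁻¹] := by
  have ha1' : a + 1 ≠ 0 := by
    intro h; apply ham1; linear_combination h
  have h3 : a * a⁻¹ = 1 := mul_inv_cancel₀ ha0
  have h2 : (a + 1) * (a + 1)⁻¹ = 1 := mul_inv_cancel₀ ha1'
  rcases eq_or_lt_of_le hk with hk2 | hk3
  · -- k = 2 : use involutions
    subst hk2
    have hM1 : (!![0, a; a⁻¹, 0] : Matrix (Fin 2) (Fin 2) ℂ) ^ 2 = 1 := by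
      rw [pow_two, Matrix.mul_fin_two]
      ext i j
      fin_cases i <;> fin_cases j <;>
        simp [Matrix.one_apply] <;> linear_combination h3
    have hM2 : (!![0, 1; 1, 0] : Matrix (Fin 2) (Fin 2) ℂ) ^ 2 = 1 := by
      rw [pow_two, Matrix.mul_fin_two]
      ext i j
      fin_cases i <;> fin_cases j <;> simp [Matrix.one_apply]
    have hd1 : (!![0, a; a⁻¹, 0] : Matrix (Fin 2) (Fin 2) ℂ).det ≠ 0 := by
      rw [Matrix.det_fin_two_of]
      intro h
      have : a * a⁻¹ = 0 := by linear_combination -h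
      rw [h3] at this
      exact one_ne_zero this
    have hd2 : (!![0, 1; 1, 0] : Matrix (Fin 2) (Fin 2) ℂ).det ≠ 0 := by
      rw [Matrix.det_fin_two_of]; norm_num
    obtain ⟨J₁, hJ₁c, hJ₁k⟩ :=
      key_aux 2 !![0, a; a⁻¹, 0] 1 !![0, a; a⁻¹, 0] (by simp) hd1 (by simp) hM1
    obtain ⟨J₂, hJ₂c, hJ₂k⟩ :=
      key_aux 2 !![0, 1; 1, 0] 1 !![0, 1; 1, 0] (by simp) hd2 (by simp) hM2
    refine ⟨J₁, J₂, hJ₁k, hJ₂k, ?_⟩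
    rw [Units.val_mul, hJ₁c, hJ₂c, Matrix.mul_fin_two]
    ext i j
    fin_cases i <;> fin_cases j <;> simp
  · -- k ≥ 3 : use a primitive k-th root of unity
    have hk0 : (k : ℕ) ≠ 0 := by omega
    have hprim : IsPrimitiveRoot (Complex.exp (2 * Real.pi * Complex.I / k)) k :=
      Complex.isPrimitiveRoot_exp k hk0
    set ζ := Complex.exp (2 * Real.pi * Complex.I / k) with hζdef
    have hζk : ζ ^ k = 1 := hprim.pow_eq_one
    have hζ0 : ζ ≠ 0 := by
      intro h
      rw [h] at hζk
      simp [zero_pow hk0] at hζk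
    have hζ2 : ζ ^ 2 ≠ 1 := by
      intro h
      have hdvd := (IsPrimitiveRoot.pow_eq_one_iff_dvd hprim 2).mp h
      have := Nat.le_of_dvd (by norm_num) hdvd
      omega
    have h1 : ζ * ζ⁻¹ = 1 := mul_inv_cancel₀ hζ0
    have hζne : ζ⁻¹ - ζ ≠ 0 := by
      intro h
      apply hζ2
      have hinv : ζ⁻¹ = ζ := by linear_combination h
      calc ζ ^ 2 = ζ * ζ := sq ζ
        _ = ζ⁻¹ * ζ := by rw [hinv]
        _ = 1 := inv_mul_cancel₀ hζ0
    -- explicit matrices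
    set M₁ : Matrix (Fin 2) (Fin 2) ℂ :=
      !![(ζ+ζ⁻¹)*a*(a+1)⁻¹, 1;
         (ζ+ζ⁻¹)*a*(a+1)⁻¹*((ζ+ζ⁻¹)*(a+1)⁻¹) - 1, (ζ+ζ⁻¹)*(a+1)⁻¹] with hM₁
    set M₂ : Matrix (Fin 2) (Fin 2) ℂ :=
      !![(ζ+ζ⁻¹)*(a+1)⁻¹*a, -a⁻¹;
         -((ζ+ζ⁻¹)*a*(a+1)⁻¹*((ζ+ζ⁻¹)*(a+1)⁻¹) - 1)*a, (ζ+ζ⁻¹)*a*(a+1)⁻¹*a⁻¹] with hM₂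
    set P : Matrix (Fin 2) (Fin 2) ℂ :=
      !![1, 1; ζ - (ζ+ζ⁻¹)*a*(a+1)⁻¹, ζ⁻¹ - (ζ+ζ⁻¹)*a*(a+1)⁻¹] with hP
    set Q : Matrix (Fin 2) (Fin 2) ℂ :=
      !![-a⁻¹, -a⁻¹; ζ - (ζ+ζ⁻¹)*(a+1)⁻¹*a, ζ⁻¹ - (ζ+ζ⁻¹)*(a+1)⁻¹*a] with hQ
    set D : Matrix (Fin 2) (Fin 2) ℂ := !![ζ, 0; 0, ζ⁻¹] with hD
    have hdetP : P.det ≠ 0 := by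
      rw [hP, Matrix.det_fin_two_of]
      intro h; apply hζne; linear_combination h
    have hdetQ : Q.det ≠ 0 := by
      rw [hQ, Matrix.det_fin_two_of]
      intro h
      have hb : a⁻¹ ≠ 0 := inv_ne_zero ha0
      have : a⁻¹ * (ζ⁻¹ - ζ) = 0 := by linear_combination -h
      rcases mul_eq_zero.mp this with h' | h'
      · exact hb h'
      · exact hζne h'
    have hdetD : D.det ≠ 0 := by
      rw [hD, Matrix.det_fin_two_of]
      intro h
      have : ζ * ζ⁻¹ = 0 := by linear_combination h
      rw [h1] at this
      exact one_ne_zero this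
    have hDk : D ^ k = 1 := by
      have hdiag : D = Matrix.diagonal ![ζ, ζ⁻¹] := by
        ext i j
        fin_cases i <;> fin_cases j <;> simp [hD, Matrix.diagonal]
      rw [hdiag, Matrix.diagonal_pow]
      have hv : (![ζ, ζ⁻¹] ^ k) = ![ζ ^ k, (ζ⁻¹) ^ k] := by
        ext i; fin_cases i <;> simp
      rw [hv, hζk, inv_pow, hζk, inv_one]
      ext i j
      fin_cases i <;> fin_cases j <;> simp [Matrix.diagonal, Matrix.one_apply]
    have hM1P : M₁ * P = P * D := by
      rw [hM₁, hP, hD, Matrix.mul_fin_two, Matrix.mul_fin_two]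
      ext i j
      fin_cases i <;> fin_cases j <;>
        simp only [Matrix.cons_val', Matrix.cons_val_zero, Matrix.empty_val',
          Matrix.cons_val_fin_one, Matrix.cons_val_one, Matrix.head_cons,
          Matrix.head_fin_const, Matrix.of_apply, Fin.isValue, Fin.mk_zero, Fin.mk_one]
      · ring
      · ring
      · linear_combination ((ζ+ζ⁻¹)*ζ)*h2 + h1
      · linear_combination ((ζ+ζ⁻¹)*ζ⁻¹)*h2 + h1
    have hM2Q : M₂ * Q = Q * D := by
      rw [hM₂, hQ, hD, Matrix.mul_fin_two, Matrix.mul_fin_two]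
      ext i j
      fin_cases i <;> fin_cases j <;>
        simp only [Matrix.cons_val', Matrix.cons_val_zero, Matrix.empty_val',
          Matrix.cons_val_fin_one, Matrix.cons_val_one, Matrix.head_cons,
          Matrix.head_fin_const, Matrix.of_apply, Fin.isValue, Fin.mk_zero, Fin.mk_one]
      · ring
      · ring
      · linear_combination ((ζ+ζ⁻¹)*(a+1)⁻¹*ζ - 1)*h3 + ((ζ+ζ⁻¹)*ζ)*h2 + h1
      · linear_combination ((ζ+ζ⁻¹)*(a+1)⁻¹*ζ⁻¹ - 1)*h3 + ((ζ+ζ⁻¹)*ζ⁻¹)*h2 + h1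
    obtain ⟨J₁, hJ₁c, hJ₁k⟩ := key_aux k M₁ P D hdetP hdetD hM1P hDk
    obtain ⟨J₂, hJ₂c, hJ₂k⟩ := key_aux k M₂ Q D hdetQ hdetD hM2Q hDk
    refine ⟨J₁, J₂, hJ₁k, hJ₂k, ?_⟩
    rw [Units.val_mul, hJ₁c, hJ₂c, hM₁, hM₂, Matrix.mul_fin_two]
    ext i j
    fin_cases i <;> fin_cases j <;>
      simp only [Matrix.cons_val', Matrix.cons_val_zero, Matrix.empty_val',
        Matrix.cons_val_fin_one, Matrix.cons_val_one, Matrix.head_cons,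
        Matrix.head_fin_const, Matrix.of_apply, Fin.isValue, Fin.mk_zero, Fin.mk_one] <;>
      ring
end
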